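/- Let j be a positive integer, s ∈ ℤ, t a positive integer, and let β ∈ E be a nonzero element satisfying τ_x^t(β) = q^s·β (for instance β = c·x^{s/t} with c ∈ F). Suppose α = q^{−s·j}·τ_x^t(γ) − γ for some γ ∈ E. Then the rational function α/(y − β)^j is (τ_x,τ_y)-summable in E(y). -/

import Mathlib

/-- `E`, an algebraic closure of the rational function field `F(x)`. -/
noncomputable abbrev Ebar (F : Type*) [Field F] : Type _ := AlgebraicClosure (RatFunc F)

/-- The element `x` of `F(x) ⊆ E`. -/
noncomputable abbrev Ebar.x (F : Type*) [Field F] : Ebar F :=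
  algebraMap (RatFunc F) (Ebar F) RatFunc.X

/-- The embedding of a constant `a ∈ F` into `E`. -/
noncomputable abbrev Ebar.c (F : Type*) [Field F] (a : F) : Ebar F :=
  algebraMap (RatFunc F) (Ebar F) (RatFunc.C a)

/-!
For `u = γ / (y - β)^j`, the hypotheses on `β` and `α` say exactly that
`τ_y^s (τ_x^t u) - u = α / (y - β)^j`. For any automorphism `σ`, `σ^n v - v` is
`σ`-summable by telescoping, and splitting
`τ_y^s (τ_x^t u) - u = (τ_y^s w - w) + (τ_x^t u - u)` with `w = τ_x^t u` gives the claim.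
-/

open Finset RatFunc

section Telescoping

variable {G A : Type*} [AddCommGroup A]

theorem pow_smul_sub_self_eq [Monoid G] [DistribMulAction G A] (g : G) (n : ℕ) (a : A) :
    (g ^ n) • a - a =
      g • (∑ i ∈ range n, (g ^ i) • a) - ∑ i ∈ range n, (g ^ i) • a := by
  rw [smul_sum, ← sum_sub_distrib]
  simp only [smul_smul, ← pow_succ']
  rw [sum_range_sub (fun i ↦ (g ^ i) • a), pow_zero, one_smul]

theorem exists_zpow_smul_sub_self_eq [Group G] [DistribMulAction G A] (g : G) (n : ℤ) (a : A) :
    ∃ v, (g ^ n) • a - a = g • v - v := by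
  obtain ⟨k, rfl | rfl⟩ := n.eq_nat_or_neg
  · exact ⟨_, by simpa using pow_smul_sub_self_eq g k a⟩
  · refine ⟨-∑ i ∈ range k, (g ^ i) • (g ^ k)⁻¹ • a, ?_⟩
    have h := pow_smul_sub_self_eq g k ((g ^ k)⁻¹ • a)
    rw [smul_inv_smul] at h
    rw [zpow_neg, zpow_natCast, ← neg_sub a, h, smul_neg]
    abel

end Telescoping

theorem AlgEquiv.zpow_apply_eq_zpow_smul {K A : Type*} [Field K] [Ring A] [Algebra K A]
    (σ : A ≃ₐ[K] A) {x : A} {c : K} (hc : c ≠ 0) (hx : σ x = c • x) (m : ℤ) :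
    (σ ^ m) x = c ^ m • x := by
  have hpow : ∀ n : ℕ, (σ ^ n) x = c ^ n • x := by
    intro n
    induction n with
    | zero => simp
    | succ n ih => rw [pow_succ', AlgEquiv.mul_apply, ih, map_smul, hx, smul_smul, pow_succ]
  obtain ⟨n, rfl | rfl⟩ := m.eq_nat_or_neg
  · simpa using hpow n
  · rw [zpow_neg, zpow_natCast, AlgEquiv.aut_inv, AlgEquiv.symm_apply_eq, map_smul, hpow,
      smul_smul, zpow_neg, zpow_natCast, inv_mul_cancel₀ (pow_ne_zero n hc), one_smul]

namespace RatFunc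

variable {K : Type*} [Field K]

theorem pow_apply_C_div_X_sub_C_pow (φ : K⟮X⟯ ≃+* K⟮X⟯) (τ : K ≃+* K)
    (hC : ∀ a, φ (C a) = C (τ a)) (hX : φ X = X) (n : ℕ) (a b : K) (j : ℕ) :
    (φ ^ n) (C a / (X - C b) ^ j) = C ((τ ^ n) a) / (X - C ((τ ^ n) b)) ^ j := by
  have hCn : ∀ a, (φ ^ n) (C a) = C ((τ ^ n) a) := fun a ↦ by
    simpa only [RingAut.coe_pow] using
      (Function.Semiconj.iterate_right (f := ⇑C) (fun a ↦ (hC a).symm) n a).symm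
  have hXn : (φ ^ n) X = X := by
    rw [RingAut.coe_pow]
    exact Function.iterate_fixed hX n
  rw [map_div₀, map_pow, map_sub, hCn, hCn, hXn]

theorem map_C_div_X_sub_C_pow {Φ : Type*} [FunLike Φ K⟮X⟯ K⟮X⟯] [AlgHomClass Φ K K⟮X⟯ K⟮X⟯]
    (σ : Φ) {d : K} (hd : d ≠ 0) (hX : σ X = d • X) (a b : K) (j : ℕ) :
    σ (C a / (X - C b) ^ j) = C (a / d ^ j) / (X - C (b / d)) ^ j := by
  have hσC : ∀ a, σ (C a) = C a := fun a ↦ by simpa using AlgHomClass.commutes σ a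
  have hfactor : d • X - C b = C d * (X - C (b / d)) := by
    rw [smul_eq_C_mul, mul_sub, ← map_mul, mul_div_cancel₀ b hd]
  rw [map_div₀, map_pow, map_sub, hσC, hσC, hX, hfactor, mul_pow, ← map_pow, div_mul_eq_div_div,
    ← map_div₀]

end RatFunc

theorem simple_fraction_qshift_summable_general
    (F : Type*) [Field F]
    (q : F) (hq0 : q ≠ 0)
    (τx : Ebar F ≃+* Ebar F)
    (Tx : RatFunc (Ebar F) ≃+* RatFunc (Ebar F))
    (hTxC : ∀ a : Ebar F, Tx (RatFunc.C a) = RatFunc.C (τx a))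
    (hTxX : Tx RatFunc.X = RatFunc.X)
    (τy : RatFunc (Ebar F) ≃ₐ[Ebar F] RatFunc (Ebar F))
    (hτy : τy RatFunc.X = RatFunc.C (Ebar.c F q) * RatFunc.X)
    (j : ℕ) (s : ℤ) (t : ℕ)
    (β α : Ebar F)
    (hβ : (τx ^ t) β = Ebar.c F q ^ s * β)
    (hα : ∃ γ : Ebar F, α = Ebar.c F q ^ (-(s * (j : ℤ))) * (τx ^ t) γ - γ) :
    ∃ g h : RatFunc (Ebar F),
      RatFunc.C α / (RatFunc.X - RatFunc.C β) ^ j = Tx g - g + τy h - h := by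
  obtain ⟨γ, rfl⟩ := hα
  set c := Ebar.c F q
  have hc : c ≠ 0 := (map_ne_zero _).2 ((map_ne_zero _).2 hq0)
  set u := C γ / (X - C β) ^ j
  have hTx : (Tx ^ t) u = C ((τx ^ t) γ) / (X - C (c ^ s * β)) ^ j := by
    rw [pow_apply_C_div_X_sub_C_pow Tx τx hTxC hTxX, hβ]
  have hτyX : (τy ^ s) X = c ^ s • X :=
    τy.zpow_apply_eq_zpow_smul hc (by rw [hτy, smul_eq_C_mul]) s
  have hshift : (τy ^ s) ((Tx ^ t) u) = C (c ^ (-(s * j)) * (τx ^ t) γ) / (X - C β) ^ j := by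
    rw [hTx, map_C_div_X_sub_C_pow _ (zpow_ne_zero s hc) hτyX,
      mul_div_cancel_left₀ _ (zpow_ne_zero s hc), div_eq_inv_mul ((τx ^ t) γ), zpow_neg, zpow_mul,
      zpow_natCast]
  obtain ⟨g, hg⟩ : ∃ g, (Tx ^ t) u - u = Tx g - g := ⟨_, pow_smul_sub_self_eq Tx t u⟩
  obtain ⟨h, hh⟩ : ∃ h, (τy ^ s) ((Tx ^ t) u) - (Tx ^ t) u = τy h - h :=
    exists_zpow_smul_sub_self_eq τy s ((Tx ^ t) u)
  refine ⟨g, h, ?_⟩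
  calc C (c ^ (-(s * j)) * (τx ^ t) γ - γ) / (X - C β) ^ j = (τy ^ s) ((Tx ^ t) u) - u := by
        rw [hshift, map_sub, sub_div]
    _ = ((τy ^ s) ((Tx ^ t) u) - (Tx ^ t) u) + ((Tx ^ t) u - u) := by ring
    _ = Tx g - g + τy h - h := by rw [hh, hg]; ring

/-- Let `F` be an algebraically closed field of characteristic zero, `q ∈ F` nonzero
and not a root of unity, `E` the algebraic closure of `F(x)`, `τ_x` an automorphism of
`E` fixing `F` with `τ_x(x) = q·x`, extended coefficientwise to `E(y)` (denoted `Tx`),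
and `τ_y` the `E`-automorphism of `E(y)` with `τ_y(y) = q·y`.  Let `j, t` be positive
integers and `s ∈ ℤ`, and let `β ∈ E` be nonzero with `τ_x^t(β) = q^s·β`.  If
`α = q^{-s·j}·τ_x^t(γ) - γ` for some `γ ∈ E`, then `α/(y - β)^j` is
`(τ_x,τ_y)`-summable in `E(y)`. -/
theorem simple_fraction_qshift_summable
    (F : Type*) [Field F] [IsAlgClosed F] [CharZero F]
    (q : F) (hq0 : q ≠ 0) (hqru : ∀ k : ℕ, 0 < k → q ^ k ≠ 1)
    (τx : Ebar F ≃+* Ebar F)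
    (hτxF : ∀ a : F, τx (Ebar.c F a) = Ebar.c F a)
    (hτxx : τx (Ebar.x F) = Ebar.c F q * Ebar.x F)
    (Tx : RatFunc (Ebar F) ≃+* RatFunc (Ebar F))
    (hTxC : ∀ a : Ebar F, Tx (RatFunc.C a) = RatFunc.C (τx a))
    (hTxX : Tx RatFunc.X = RatFunc.X)
    (τy : RatFunc (Ebar F) ≃ₐ[Ebar F] RatFunc (Ebar F))
    (hτy : τy RatFunc.X = RatFunc.C (Ebar.c F q) * RatFunc.X)
    (j : ℕ) (hj : 0 < j) (s : ℤ) (t : ℕ) (ht : 0 < t)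
    (β α : Ebar F) (hβ0 : β ≠ 0)
    (hβ : (τx ^ t) β = Ebar.c F q ^ s * β)
    (hα : ∃ γ : Ebar F, α = Ebar.c F q ^ (-(s * (j : ℤ))) * (τx ^ t) γ - γ) :
    ∃ g h : RatFunc (Ebar F),
      RatFunc.C α / (RatFunc.X - RatFunc.C β) ^ j = Tx g - g + τy h - h :=
  simple_fraction_qshift_summable_general F q hq0 τx Tx hTxC hTxX τy hτy j s t β α hβ hα
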